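/- arXiv:2005.07104 — 7 statements merged into one kernel-verified Lean document; each statement's English description precedes it below -/
import Mathlib

section
/- Let n ≥ 5 and let s₀, s₁, …, s_{n-1} be nonzero complex numbers satisfying s_i·s_j = s_l·s_m for all indices with i+j ≡ l+m (mod n), i ≠ j, l ≠ m. Then there exists h ∈ {0, …, n-1} such that s_i = ω^{h·i}·s₀ for all i = 0, …, n-1, where ω = exp(2πi/n) is a primitive n-th root of unity. -/
open Complex

theorem stmt_0 (n : ℕ) (hn : 5 ≤ n) (s : ZMod n → ℂ)
    (hs : ∀ i, s i ≠ 0)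
    (hrel : ∀ i j l m : ZMod n, i + j = l + m → i ≠ j → l ≠ m →
      s i * s j = s l * s m) :
    ∃ h : ℕ, h < n ∧ ∀ i : ZMod n,
      s i = Complex.exp (2 * Real.pi * Complex.I / n) ^ (h * i.val) * s 0 := by
  haveI : NeZero n := ⟨by omega⟩
  -- small numbers are nonzero in ZMod n
  have hnz : ∀ k : ℕ, 0 < k → k < n → (k : ZMod n) ≠ 0 := by
    intro k hk1 hk2 h
    rw [ZMod.natCast_eq_zero_iff] at h
    have := Nat.le_of_dvd hk1 h
    omega
  have h1 : (1 : ZMod n) ≠ 0 := by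
    have := hnz 1 (by omega) (by omega); simpa using this
  have h2 : (2 : ZMod n) ≠ 0 := by
    have := hnz 2 (by omega) (by omega); simpa using this
  have h3 : (3 : ZMod n) ≠ 0 := by
    have := hnz 3 (by omega) (by omega); simpa using this
  have h4 : (4 : ZMod n) ≠ 0 := by
    have := hnz 4 (by omega) (by omega); simpa using this
  -- square lemma
  have hsq : ∀ i : ZMod n, s i * s i = s (i + 1) * s (i - 1) := by
    intro i
    have e1 : s (i + 1) * s (i - 1) = s (i + 2) * s (i - 2) :=
      hrel _ _ _ _ (by ring) (fun h => h2 (by linear_combination h))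
        (fun h => h4 (by linear_combination h))
    have e2 : s i * s (i + 1) = s (i + 2) * s (i - 1) :=
      hrel _ _ _ _ (by ring) (fun h => h1 (by linear_combination -h))
        (fun h => h3 (by linear_combination h))
    have e3 : s i * s (i - 1) = s (i + 1) * s (i - 2) :=
      hrel _ _ _ _ (by ring) (fun h => h1 (by linear_combination h))
        (fun h => h3 (by linear_combination h))
    have hne : s (i + 1) * s (i - 1) ≠ 0 := mul_ne_zero (hs _) (hs _)
    apply mul_right_cancel₀ hne
    calc s i * s i * (s (i + 1) * s (i - 1))
        = (s i * s (i + 1)) * (s i * s (i - 1)) := by ring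
      _ = (s (i + 2) * s (i - 1)) * (s (i + 1) * s (i - 2)) := by rw [e2, e3]
      _ = (s (i + 2) * s (i - 2)) * (s (i + 1) * s (i - 1)) := by ring
      _ = (s (i + 1) * s (i - 1)) * (s (i + 1) * s (i - 1)) := by rw [← e1]
  -- full relation, no distinctness
  have key : ∀ a b c d : ZMod n, a + b = c + d → s a * s b = s c * s d := by
    intro a b c d habcd
    by_cases hab : a = b
    · by_cases hcd : c = d
      · subst hab; subst hcd
        rw [hsq a, hsq c]
        exact hrel _ _ _ _ (by linear_combination habcd)
          (fun h => h2 (by linear_combination h)) (fun h => h2 (by linear_combination h))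
      · subst hab
        rw [hsq a]
        exact hrel _ _ _ _ (by linear_combination habcd)
          (fun h => h2 (by linear_combination h)) hcd
    · by_cases hcd : c = d
      · subst hcd
        rw [hsq c]
        exact hrel _ _ _ _ (by linear_combination habcd) hab (fun h => h2 (by linear_combination h))
      · exact hrel _ _ _ _ habcd hab hcd
  set r : ℂ := s 1 / s 0 with hr
  have main : ∀ m : ℕ, s (m : ZMod n) = r ^ m * s 0 := by
    intro m
    induction m with
    | zero => simp
    | succ m ih =>
      have := key ((m : ZMod n) + 1) 0 (m : ZMod n) 1 (by ring)
      have hcast : ((m + 1 : ℕ) : ZMod n) = (m : ZMod n) + 1 := by push_cast; ring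
      rw [hcast]
      rw [ih] at this
      apply mul_right_cancel₀ (hs 0)
      rw [this]
      have hr1 : r * s 0 = s 1 := by rw [hr]; exact div_mul_cancel₀ (s 1) (hs 0)
      rw [← hr1]
      ring
  have rn : r ^ n = 1 := by
    have := main n
    rw [ZMod.natCast_self] at this
    have hs0 := hs 0
    field_simp at this
    exact this.symm
  have hprim : IsPrimitiveRoot (Complex.exp (2 * Real.pi * Complex.I / n)) n :=
    Complex.isPrimitiveRoot_exp n (by omega)
  obtain ⟨h, hh, hpow⟩ := hprim.eq_pow_of_pow_eq_one rn
  refine ⟨h, hh, fun i => ?_⟩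
  have : ((i.val : ℕ) : ZMod n) = i := ZMod.natCast_rightInverse i
  calc s i = s ((i.val : ℕ) : ZMod n) := by rw [this]
    _ = r ^ i.val * s 0 := main i.val
    _ = Complex.exp (2 * Real.pi * Complex.I / n) ^ (h * i.val) * s 0 := by
        rw [← hpow, ← pow_mul]
end

section
/- Let n ≥ 5 and let s₀, …, s_{n-1} be nonzero complex numbers satisfying s_i·s_j = s_l·s_m whenever i+j ≡ l+m (mod n) with i ≠ j, l ≠ m. Then for every k ≥ 1 and all index tuples (a₁,…,a_k), (b₁,…,b_k) with a₁+⋯+a_k ≡ b₁+⋯+b_k (mod n), one has s_{a₁}⋯s_{a_k} = s_{b₁}⋯s_{b_k}. -/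
theorem stmt_3 (n : ℕ) (hn : 5 ≤ n) (s : ZMod n → ℂ)
    (hs : ∀ i, s i ≠ 0)
    (hrel : ∀ i j l m : ZMod n, i + j = l + m → i ≠ j → l ≠ m →
      s i * s j = s l * s m) :
    ∀ (k : ℕ), 1 ≤ k → ∀ (a b : Fin k → ZMod n),
      (∑ i, a i) = (∑ i, b i) → (∏ i, s (a i)) = ∏ i, s (b i) := by
  haveI : NeZero n := ⟨by omega⟩
  -- x ≠ x + c for small nonzero c
  have hne : ∀ (x : ZMod n) (c : ℕ), 0 < c → c < n → x ≠ x + (c : ZMod n) := by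
    intro x c hc1 hc2 h
    have h0 : ((c : ℕ) : ZMod n) = 0 := by linear_combination -h
    rw [ZMod.natCast_eq_zero_iff] at h0
    have := Nat.le_of_dvd hc1 h0
    omega
  -- key: squares
  have key : ∀ a : ZMod n, s a * s a = s (a + 1) * s (a - 1) := by
    intro a
    have h1 : s a * s a * s (a + 1) = s (a + 1) * s (a - 1) * s (a + 1) := by
      calc s a * s a * s (a + 1) = s a * (s a * s (a + 1)) := by ring
        _ = s a * (s (a - 1) * s (a + 2)) := by
              rw [hrel a (a + 1) (a - 1) (a + 2) (by ring)
                (fun h => hne a 1 (by norm_num) (by omega) (by push_cast; linear_combination h))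
                (fun h => hne (a - 1) 3 (by norm_num) (by omega) (by push_cast; linear_combination h))]
        _ = (s a * s (a - 1)) * s (a + 2) := by ring
        _ = (s (a + 1) * s (a - 2)) * s (a + 2) := by
              rw [hrel a (a - 1) (a + 1) (a - 2) (by ring)
                (fun h => hne (a - 1) 1 (by norm_num) (by omega) (by push_cast; linear_combination -h))
                (fun h => hne (a - 2) 3 (by norm_num) (by omega) (by push_cast; linear_combination -h))]
        _ = s (a + 1) * (s (a - 2) * s (a + 2)) := by ring
        _ = s (a + 1) * (s (a - 1) * s (a + 1)) := by
              rw [hrel (a - 2) (a + 2) (a - 1) (a + 1) (by ring)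
                (fun h => hne (a - 2) 4 (by norm_num) (by omega) (by push_cast; linear_combination h))
                (fun h => hne (a - 1) 2 (by norm_num) (by omega) (by push_cast; linear_combination h))]
        _ = s (a + 1) * s (a - 1) * s (a + 1) := by ring
    exact mul_right_cancel₀ (hs (a + 1)) h1
  -- full relation without distinctness
  have hrel' : ∀ i j l m : ZMod n, i + j = l + m → s i * s j = s l * s m := by
    intro i j l m h
    by_cases hij : i = j
    · subst hij
      by_cases hlm : l = m
      · subst hlm
        rw [key i, key l]
        exact hrel (i + 1) (i - 1) (l + 1) (l - 1) (by linear_combination h)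
          (fun h' => hne (i - 1) 2 (by norm_num) (by omega) (by push_cast; linear_combination -h'))
          (fun h' => hne (l - 1) 2 (by norm_num) (by omega) (by push_cast; linear_combination -h'))
      · rw [key i]
        exact hrel (i + 1) (i - 1) l m (by linear_combination h)
          (fun h' => hne (i - 1) 2 (by norm_num) (by omega) (by push_cast; linear_combination -h')) hlm
    · by_cases hlm : l = m
      · subst hlm
        rw [key l]
        exact hrel i j (l + 1) (l - 1) (by linear_combination h) hij
          (fun h' => hne (l - 1) 2 (by norm_num) (by omega) (by push_cast; linear_combination -h'))
      · exact hrel i j l m h hij hlm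
  -- normal form
  have norm : ∀ (k : ℕ) (a : Fin (k + 1) → ZMod n),
      (∏ i, s (a i)) = s (∑ i, a i) * (s 0) ^ k := by
    intro k
    induction k with
    | zero => intro a; simp
    | succ k ih =>
        intro a
        rw [Fin.prod_univ_succ, ih (fun i => a i.succ)]
        have h2 : s (a 0) * s (∑ i : Fin (k + 1), a i.succ)
            = s (∑ i : Fin (k + 2), a i) * s 0 := by
          refine hrel' _ _ _ _ ?_
          rw [add_zero]
          exact (Fin.sum_univ_succ a).symm
        linear_combination s 0 ^ k * h2
  intro k hk a b hsum
  obtain ⟨k, rfl⟩ : ∃ m, k = m + 1 := ⟨k - 1, by omega⟩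
  rw [norm k a, norm k b, hsum]
end

section
/- Let n ≥ 5 and let s₀, …, s_{n-1} be nonzero complex numbers satisfying s_i·s_j = s_l·s_m whenever i+j ≡ l+m (mod n), i ≠ j, l ≠ m. Then s₀ⁿ = s_iⁿ for all i = 0, …, n-1. -/
theorem stmt_4 (n : ℕ) (hn : 5 ≤ n) (s : ZMod n → ℂ)
    (hs : ∀ i, s i ≠ 0)
    (hrel : ∀ i j l m : ZMod n, i + j = l + m → i ≠ j → l ≠ m →
      s i * s j = s l * s m) :
    ∀ i : ZMod n, s 0 ^ n = s i ^ n := by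
  haveI : NeZero n := ⟨by omega⟩
  -- small nonzero constants in ZMod n
  have hc : ∀ c : ℕ, 0 < c → c < n → ((c : ZMod n)) ≠ 0 := by
    intro c h1 h2 h
    rw [ZMod.natCast_eq_zero_iff] at h
    exact absurd (Nat.le_of_dvd h1 h) (by omega)
  have h1 : (1 : ZMod n) ≠ 0 := by simpa using hc 1 (by omega) (by omega)
  have h2 : (2 : ZMod n) ≠ 0 := by simpa using hc 2 (by omega) (by omega)
  have h3 : (3 : ZMod n) ≠ 0 := by simpa using hc 3 (by omega) (by omega)
  have h4 : (4 : ZMod n) ≠ 0 := by simpa using hc 4 (by omega) (by omega)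
  -- step lemma: s(i+1)^2 = s(i+2) * s i
  have hstep : ∀ i : ZMod n, s (i + 1) * s (i + 1) = s (i + 2) * s i := by
    intro i
    have hB : s i * s (i + 4) = s (i + 1) * s (i + 3) :=
      hrel i (i + 4) (i + 1) (i + 3) (by ring)
        (fun h => h4 (by linear_combination -h))
        (fun h => h2 (by linear_combination -h))
    have hA : s (i + 1) * s (i + 4) = s (i + 2) * s (i + 3) :=
      hrel (i + 1) (i + 4) (i + 2) (i + 3) (by ring)
        (fun h => h3 (by linear_combination -h))
        (fun h => h1 (by linear_combination -h))
    have hne : s (i + 3) * s (i + 4) ≠ 0 := mul_ne_zero (hs _) (hs _)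
    apply mul_right_cancel₀ hne
    calc s (i + 1) * s (i + 1) * (s (i + 3) * s (i + 4))
        = (s (i + 1) * s (i + 4)) * (s (i + 1) * s (i + 3)) := by ring
      _ = (s (i + 2) * s (i + 3)) * (s i * s (i + 4)) := by rw [hA, hB]
      _ = s (i + 2) * s i * (s (i + 3) * s (i + 4)) := by ring
  -- ratio constancy: s(k+1) * s 0 = s k * s 1
  have hr : ∀ k : ℕ, s ((k : ZMod n) + 1) * s 0 = s (k : ZMod n) * s 1 := by
    intro k
    induction k with
    | zero => rw [Nat.cast_zero, zero_add, mul_comm]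
    | succ k ih =>
      have hst := hstep (k : ZMod n)
      have hne : s (k : ZMod n) * s ((k : ZMod n) + 1) ≠ 0 :=
        mul_ne_zero (hs _) (hs _)
      have : s ((k : ZMod n) + 2) * s 0 = s ((k : ZMod n) + 1) * s 1 := by
        apply mul_right_cancel₀ hne
        calc s ((k : ZMod n) + 2) * s 0 * (s (k : ZMod n) * s ((k : ZMod n) + 1))
            = (s ((k : ZMod n) + 2) * s (k : ZMod n)) * s 0 * s ((k : ZMod n) + 1) := by ring
          _ = (s ((k : ZMod n) + 1) * s ((k : ZMod n) + 1)) * s 0 * s ((k : ZMod n) + 1) := by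
              rw [hst]
          _ = s ((k : ZMod n) + 1) * (s ((k : ZMod n) + 1) * s 0) * s ((k : ZMod n) + 1) := by ring
          _ = s ((k : ZMod n) + 1) * (s (k : ZMod n) * s 1) * s ((k : ZMod n) + 1) := by rw [ih]
          _ = s ((k : ZMod n) + 1) * s 1 * (s (k : ZMod n) * s ((k : ZMod n) + 1)) := by ring
      have hcast : ((k + 1 : ℕ) : ZMod n) = (k : ZMod n) + 1 := by push_cast; ring
      rw [hcast]
      calc s ((k : ZMod n) + 1 + 1) * s 0
          = s ((k : ZMod n) + 2) * s 0 := by norm_num [add_assoc]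
        _ = s ((k : ZMod n) + 1) * s 1 := this
  -- main induction: s k * s0^k = s0 * s1^k
  have hmain : ∀ k : ℕ, s (k : ZMod n) * (s 0) ^ k = s 0 * (s 1) ^ k := by
    intro k
    induction k with
    | zero => simp
    | succ k ih =>
      have hcast : ((k + 1 : ℕ) : ZMod n) = (k : ZMod n) + 1 := by push_cast; ring
      rw [hcast, pow_succ, pow_succ, ← mul_assoc]
      calc s ((k : ZMod n) + 1) * s 0 ^ k * s 0
          = (s ((k : ZMod n) + 1) * s 0) * s 0 ^ k := by ring
        _ = (s (k : ZMod n) * s 1) * s 0 ^ k := by rw [hr k]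
        _ = (s (k : ZMod n) * s 0 ^ k) * s 1 := by ring
        _ = (s 0 * s 1 ^ k) * s 1 := by rw [ih]
        _ = s 0 * (s 1 ^ k * s 1) := by ring
  -- at k = n : s 0 ^ n = s 1 ^ n
  have hn1 : s 0 ^ n = s 1 ^ n := by
    have := hmain n
    rw [ZMod.natCast_self] at this
    exact mul_left_cancel₀ (hs 0) this
  intro i
  have hv := hmain i.val
  rw [ZMod.natCast_zmod_val] at hv
  -- raise to the n-th power
  have hvn : s i ^ n * (s 0 ^ n) ^ i.val = s 0 ^ n * (s 0 ^ n) ^ i.val := by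
    have := congrArg (· ^ n) hv
    simp only [mul_pow, ← pow_mul] at this
    calc s i ^ n * (s 0 ^ n) ^ i.val
        = s i ^ n * s 0 ^ (i.val * n) := by rw [← pow_mul, Nat.mul_comm]
      _ = s 0 ^ n * s 1 ^ (i.val * n) := by
          rw [← this]
      _ = s 0 ^ n * (s 1 ^ n) ^ i.val := by rw [← pow_mul, Nat.mul_comm]
      _ = s 0 ^ n * (s 0 ^ n) ^ i.val := by rw [hn1]
  exact (mul_right_cancel₀ (pow_ne_zero _ (pow_ne_zero _ (hs 0))) hvn).symm
end

section
/- Let n ≥ 2 and ω ∈ ℂ with ω ≠ 0, ω ≠ 1. Define the row vector v ∈ ℂ^{n-1} by v_i = (-1)^{n-i}·(ω^{n-i} − 1)/(ω − 1) for i = 1, …, n-1, and define the (n-1)×(n-1) matrix T by: for odd j, T_{jj} = −ω^{-1} and T_{ij} = 0 for i ≠ j; for even j, T_{j-1,j} = ω^{-1}, T_{jj} = T_{j+1,j} = 1 (the entry T_{j+1,j} being present only if j+1 ≤ n-1), and all other entries of column j are zero. Then v·T = −ω^{-1}·v, i.e. v is a left eigenvector of T with eigenvalue −ω^{-1}. 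-/
theorem stmt_5 (n : ℕ) (hn : 2 ≤ n) (ω : ℂ) (hω0 : ω ≠ 0) (hω1 : ω ≠ 1)
    (v : Fin (n - 1) → ℂ)
    (hv : ∀ i : Fin (n - 1),
      v i = (-1) ^ (n - (i.val + 1)) * (ω ^ (n - (i.val + 1)) - 1) / (ω - 1))
    (T : Matrix (Fin (n - 1)) (Fin (n - 1)) ℂ)
    (hT : ∀ i j : Fin (n - 1),
      T i j =
        if Odd (j.val + 1) then (if i = j then -ω⁻¹ else 0)
        else if i.val + 1 = j.val then ω⁻¹
        else if i = j then 1
        else if i.val = j.val + 1 then 1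
        else 0) :
    Matrix.vecMul v T = fun i => -ω⁻¹ * v i := by
  have hω1' : ω - 1 ≠ 0 := sub_ne_zero.mpr hω1
  funext j
  have hj := j.isLt
  rw [Matrix.vecMul, dotProduct]
  by_cases hodd : Odd (j.val + 1)
  · simp only [hT, hodd, if_true, mul_ite, mul_zero, Finset.sum_ite_eq',
      Finset.mem_univ, if_true]
    ring
  · have hEv : Even (j.val + 1) := Nat.not_odd_iff_even.mp hodd
    obtain ⟨c, hc⟩ := hEv
    have ha : 1 ≤ j.val := by omega
    have him : j.val - 1 < n - 1 := by omega
    set im : Fin (n - 1) := ⟨j.val - 1, him⟩ with him'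
    have t1 : T im j = ω⁻¹ := by
      rw [hT, if_neg hodd, if_pos]
      show j.val - 1 + 1 = j.val
      omega
    have t2 : T j j = 1 := by
      rw [hT, if_neg hodd, if_neg (by omega : ¬(j.val + 1 = j.val)), if_pos rfl]
    by_cases hlt : j.val + 1 < n - 1
    · set ip : Fin (n - 1) := ⟨j.val + 1, hlt⟩ with hip'
      have hipj : ¬(ip = j) := by
        intro h
        have : j.val + 1 = j.val := congrArg Fin.val h
        omega
      have t3 : T ip j = 1 := by
        rw [hT, if_neg hodd, if_neg (by omega : ¬(j.val + 1 + 1 = j.val)),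
          if_neg hipj, if_pos rfl]
      have hzero : ∀ i ∈ Finset.univ, i ∉ ({im, j, ip} : Finset (Fin (n-1))) →
          v i * T i j = 0 := by
        intro i _ hi
        simp only [Finset.mem_insert, Finset.mem_singleton, not_or] at hi
        obtain ⟨h1, h2, h3⟩ := hi
        rw [hT, if_neg hodd, if_neg, if_neg h2, if_neg, mul_zero]
        · intro h; exact h3 (Fin.ext (show i.val = j.val + 1 from h))
        · intro h; exact h1 (Fin.ext (show i.val = j.val - 1 by omega))
      rw [← Finset.sum_subset (Finset.subset_univ ({im, j, ip} : Finset (Fin (n-1)))) hzero]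
      have hd1 : im ∉ ({j, ip} : Finset (Fin (n-1))) := by
        intro h
        rcases Finset.mem_insert.mp h with h | h
        · have : j.val - 1 = j.val := congrArg Fin.val h; omega
        · have : j.val - 1 = j.val + 1 := congrArg Fin.val (Finset.mem_singleton.mp h)
          omega
      have hd2 : j ∉ ({ip} : Finset (Fin (n-1))) := by
        intro h
        have : j.val = j.val + 1 := congrArg Fin.val (Finset.mem_singleton.mp h)
        omega
      rw [Finset.sum_insert hd1, Finset.sum_insert hd2, Finset.sum_singleton,
        t1, t2, t3, hv im, hv j, hv ip]
      have E1 : n - (im.val + 1) = (n - (j.val + 2)) + 2 := by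
        show n - (j.val - 1 + 1) = (n - (j.val + 2)) + 2; omega
      have E2 : n - (j.val + 1) = (n - (j.val + 2)) + 1 := by omega
      have E3 : n - (ip.val + 1) = n - (j.val + 2) := by
        show n - (j.val + 1 + 1) = n - (j.val + 2); omega
      simp only [E1, E2, E3]
      generalize (n - (j.val + 2)) = k
      field_simp
      ring
    · have hb : j.val + 1 = n - 1 := by omega
      have hzero : ∀ i ∈ Finset.univ, i ∉ ({im, j} : Finset (Fin (n-1))) →
          v i * T i j = 0 := by
        intro i _ hi
        simp only [Finset.mem_insert, Finset.mem_singleton, not_or] at hi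
        obtain ⟨h1, h2⟩ := hi
        rw [hT, if_neg hodd, if_neg, if_neg h2, if_neg, mul_zero]
        · intro h; have := i.isLt; omega
        · intro h; exact h1 (Fin.ext (show i.val = j.val - 1 by omega))
      rw [← Finset.sum_subset (Finset.subset_univ ({im, j} : Finset (Fin (n-1)))) hzero]
      have hd1 : im ∉ ({j} : Finset (Fin (n-1))) := by
        intro h
        have : j.val - 1 = j.val := congrArg Fin.val (Finset.mem_singleton.mp h)
        omega
      rw [Finset.sum_insert hd1, Finset.sum_singleton, t1, t2, hv im, hv j]
      have E1 : n - (im.val + 1) = 2 := by show n - (j.val - 1 + 1) = 2; omega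
      have E2 : n - (j.val + 1) = 1 := by omega
      simp only [E1, E2]
      field_simp
      ring
end

section
/- Let n ≥ 3 and let ω ∈ ℂ with ωⁿ = 1 and ω ≠ 1. Define v ∈ ℂ^{n-1} by v_i = (-1)^{n-i}·(ω^{n-i} − 1)/(ω − 1). Let c ∈ ℂ^{n-1} be any vector supported on at most three consecutive positions j-1, j, j+1 (with 1 ≤ j ≤ n-1) with c_{j-1} = ω^{n-2}(1 − ω) (if j ≥ 2), c_j = ω^{n-2} − 1, c_{j+1} = ω^{n-1} − 1 (if j ≤ n-2), and all other entries zero. Then the dot product v·c = 0. -/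
theorem stmt_6 (n : ℕ) (hn : 3 ≤ n) (ω : ℂ) (hωn : ω ^ n = 1) (hω1 : ω ≠ 1)
    (v : Fin (n - 1) → ℂ)
    (hv : ∀ i : Fin (n - 1),
      v i = (-1) ^ (n - (i.val + 1)) * (ω ^ (n - (i.val + 1)) - 1) / (ω - 1))
    (j : Fin (n - 1)) (c : Fin (n - 1) → ℂ)
    (hc : ∀ i : Fin (n - 1),
      c i =
        if i.val + 1 = j.val then ω ^ (n - 2) * (1 - ω)
        else if i = j then ω ^ (n - 2) - 1
        else if i.val = j.val + 1 then ω ^ (n - 1) - 1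
        else 0) :
    (∑ i, v i * c i) = 0 := by
  have hω : ω - 1 ≠ 0 := sub_ne_zero.mpr hω1
  have hk : (j : ℕ) < n - 1 := j.isLt
  have hsplit : ∀ i : Fin (n-1), v i * c i =
      (if i = j then v i * (ω^(n-2)-1) else 0)
    + ((if i.val + 1 = (j : ℕ) then v i * (ω^(n-2)*(1-ω)) else 0)
    + (if i.val = (j : ℕ) + 1 then v i * (ω^(n-1)-1) else 0)) := by
    intro i
    rw [hc i]
    simp only [Fin.ext_iff]
    split_ifs with h1 h2 h3 <;> first | ring1 | (exfalso; omega)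
  rw [Finset.sum_congr rfl fun i _ => hsplit i, Finset.sum_add_distrib,
    Finset.sum_add_distrib, Finset.sum_ite_eq' Finset.univ j, if_pos (Finset.mem_univ j)]
  by_cases h0 : (j : ℕ) = 0
  · -- first term absent
    have hS1 : (∑ i : Fin (n-1), if i.val + 1 = (j : ℕ) then v i * (ω^(n-2)*(1-ω)) else 0) = 0 := by
      apply Finset.sum_eq_zero; intro i _; rw [if_neg]; omega
    have hS3 : (∑ i : Fin (n-1), if i.val = (j : ℕ) + 1 then v i * (ω^(n-1)-1) else 0)
        = v ⟨(j : ℕ)+1, by omega⟩ * (ω^(n-1)-1) := by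
      rw [Finset.sum_eq_single_of_mem (⟨(j : ℕ)+1, by omega⟩ : Fin (n-1)) (Finset.mem_univ _)]
      · rw [if_pos rfl]
      · intro a _ ha; rw [if_neg]; intro h; exact ha (Fin.ext h)
    rw [hS1, hS3, hv j, hv ⟨(j : ℕ)+1, by omega⟩]
    have e1 : n - ((j:ℕ)+1) = (n-2)+1 := by omega
    have e2 : n - (((⟨(j : ℕ)+1, by omega⟩ : Fin (n-1)) : ℕ)+1) = n-2 := by
      simp only [Fin.val_mk]; omega
    have e3 : ω ^ (n-1) = ω ^ ((n-2)+1) := by congr 1; omega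
    rw [e1, e2, e3]
    simp only [pow_succ]
    field_simp
    ring
  · by_cases hlast : (j : ℕ) + 1 = n - 1
    · -- last term absent
      have hS3 : (∑ i : Fin (n-1), if i.val = (j : ℕ) + 1 then v i * (ω^(n-1)-1) else 0) = 0 := by
        apply Finset.sum_eq_zero; intro i _; rw [if_neg]; omega
      have hS1 : (∑ i : Fin (n-1), if i.val + 1 = (j : ℕ) then v i * (ω^(n-2)*(1-ω)) else 0)
          = v ⟨(j : ℕ)-1, by omega⟩ * (ω^(n-2)*(1-ω)) := by
        rw [Finset.sum_eq_single_of_mem (⟨(j : ℕ)-1, by omega⟩ : Fin (n-1)) (Finset.mem_univ _)]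
        · rw [if_pos (by simp only [Fin.val_mk]; omega)]
        · intro a _ ha; rw [if_neg]; intro h
          exact ha (Fin.ext (by simp only [Fin.val_mk]; omega))
      have hrel : ω ^ (j : ℕ) * ω ^ 2 = 1 := by
        rw [← pow_add, show (j:ℕ) + 2 = n by omega]; exact hωn
      rw [hS1, hS3, hv j, hv ⟨(j : ℕ)-1, by omega⟩]
      have e1 : n - ((j:ℕ)+1) = 1 := by omega
      have e2 : n - (((⟨(j : ℕ)-1, by omega⟩ : Fin (n-1)) : ℕ)+1) = 2 := by
        simp only [Fin.val_mk]; omega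
      have e3 : n - 2 = (j:ℕ) := by omega
      rw [e1, e2, e3]
      field_simp
      linear_combination (1 - ω) * hrel
    · -- interior
      have hS1 : (∑ i : Fin (n-1), if i.val + 1 = (j : ℕ) then v i * (ω^(n-2)*(1-ω)) else 0)
          = v ⟨(j : ℕ)-1, by omega⟩ * (ω^(n-2)*(1-ω)) := by
        rw [Finset.sum_eq_single_of_mem (⟨(j : ℕ)-1, by omega⟩ : Fin (n-1)) (Finset.mem_univ _)]
        · rw [if_pos (by simp only [Fin.val_mk]; omega)]
        · intro a _ ha; rw [if_neg]; intro h
          exact ha (Fin.ext (by simp only [Fin.val_mk]; omega))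
      have hS3 : (∑ i : Fin (n-1), if i.val = (j : ℕ) + 1 then v i * (ω^(n-1)-1) else 0)
          = v ⟨(j : ℕ)+1, by omega⟩ * (ω^(n-1)-1) := by
        rw [Finset.sum_eq_single_of_mem (⟨(j : ℕ)+1, by omega⟩ : Fin (n-1)) (Finset.mem_univ _)]
        · rw [if_pos rfl]
        · intro a _ ha; rw [if_neg]; intro h; exact ha (Fin.ext h)
      set d := n - (j : ℕ) - 2 with hd
      have hd1 : 1 ≤ d := by omega
      have hrel : ω ^ (j : ℕ) * ω ^ d * ω ^ 2 = 1 := by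
        rw [← pow_add, ← pow_add, show (j:ℕ) + d + 2 = n by omega]; exact hωn
      rw [hS1, hS3, hv j, hv ⟨(j : ℕ)-1, by omega⟩, hv ⟨(j : ℕ)+1, by omega⟩]
      have e1 : n - ((j:ℕ)+1) = d+1 := by omega
      have e2 : n - (((⟨(j : ℕ)-1, by omega⟩ : Fin (n-1)) : ℕ)+1) = d+2 := by
        simp only [Fin.val_mk]; omega
      have e3 : n - (((⟨(j : ℕ)+1, by omega⟩ : Fin (n-1)) : ℕ)+1) = d := by
        simp only [Fin.val_mk]; omega
      have e4 : n - 2 = (j:ℕ) + d := by omega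
      have e5 : ω ^ (n-1) = ω ^ ((j:ℕ) + d + 1) := by congr 1; omega
      rw [e1, e2, e3, e4, e5]
      simp only [pow_succ, pow_add]
      field_simp
      linear_combination (-(-1:ℂ)^d * ω^d * (ω - 1)) * hrel
end

section
/- Let n ≥ 3 and ω ∈ ℂ with ωⁿ = 1, ω ≠ 1. Let M be the (n-1)×(n-1) tridiagonal matrix with entries M_{j-1,j} = ω^{n-2}(1 − ω), M_{j,j} = ω^{n-2} − 1, M_{j+1,j} = ω^{n-1} − 1 for each column j (entries outside the range 1,…,n-1 omitted) and all other entries zero. Then M has rank exactly n − 2, and its left kernel is one-dimensional, spanned by the vector v with v_i = (-1)^{n-i}(ω^{n-i} − 1)/(ω − 1). -/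
theorem stmt_7 (n : ℕ) (hn : 3 ≤ n) (ω : ℂ) (hωn : ω ^ n = 1) (hω1 : ω ≠ 1)
    (M : Matrix (Fin (n - 1)) (Fin (n - 1)) ℂ)
    (hM : ∀ i j : Fin (n - 1),
      M i j =
        if i.val + 1 = j.val then ω ^ (n - 2) * (1 - ω)
        else if i = j then ω ^ (n - 2) - 1
        else if i.val = j.val + 1 then ω ^ (n - 1) - 1
        else 0)
    (v : Fin (n - 1) → ℂ)
    (hv : ∀ i : Fin (n - 1),
      v i = (-1) ^ (n - (i.val + 1)) * (ω ^ (n - (i.val + 1)) - 1) / (ω - 1)) :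
    M.rank = n - 2 ∧
    ∀ w : Fin (n - 1) → ℂ, Matrix.vecMul w M = 0 ↔ ∃ c : ℂ, w = c • v := by
  set a : ℂ := ω ^ (n - 2) * (1 - ω) with ha
  set d : ℂ := ω ^ (n - 2) - 1 with hd
  set b : ℂ := ω ^ (n - 1) - 1 with hbdef
  have hωm1 : ω - 1 ≠ 0 := sub_ne_zero.mpr hω1
  have hb : b ≠ 0 := by
    rw [hbdef, sub_ne_zero]
    intro h
    apply hω1
    have h2 : ω ^ (n - 1) * ω = 1 * ω := by rw [h]
    rw [← pow_succ, Nat.sub_add_cancel (by omega), hωn, one_mul] at h2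
    exact h2.symm
  set g : ℕ → ℂ := fun k => (-1) ^ k * (ω ^ k - 1) / (ω - 1) with hg
  have hg0 : g 0 = 0 := by simp [hg]
  have hgn : g n = 0 := by simp [hg, hωn]
  have key : ∀ k : ℕ, g (k + 2) * a + g (k + 1) * d + g k * b = 0 := by
    intro k
    have hx : ω ^ (n - 2) * ω ^ 2 = 1 := by
      rw [← pow_add, Nat.sub_add_cancel (by omega), hωn]
    have hn1 : ω ^ (n - 1) = ω ^ (n - 2) * ω := by
      rw [← pow_succ]; congr 1; omega
    rw [hg, ha, hd, hbdef, hn1]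
    simp only
    field_simp
    linear_combination ((-1:ℂ)^k * ω^k * (1 - ω)) * hx
  have hvg : ∀ i : Fin (n - 1), v i = g (n - 1 - i.val) := by
    intro i
    rw [hv, hg]
    have h : n - (i.val + 1) = n - 1 - i.val := by omega
    rw [h]
  -- column formula
  have hcol : ∀ (f : Fin (n - 1) → ℂ) (j : Fin (n - 1)),
      Matrix.vecMul f M j =
        (if 1 ≤ j.val then f ⟨j.val - 1, lt_of_le_of_lt (Nat.sub_le _ _) j.isLt⟩ else 0) * a
        + f j * d
        + (if h : j.val + 1 < n - 1 then f ⟨j.val + 1, h⟩ else 0) * b := by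
    intro f j
    have hsum : Matrix.vecMul f M j = ∑ i, f i * M i j := by
      simp [Matrix.vecMul, dotProduct]
    rw [hsum]
    have hsplit : ∀ i : Fin (n - 1), f i * M i j =
        (if i.val + 1 = j.val then f i * a else 0)
        + (if i = j then f i * d else 0)
        + (if i.val = j.val + 1 then f i * b else 0) := by
      intro i
      rw [hM i j]
      by_cases h1 : i.val + 1 = j.val
      · have h2 : i ≠ j := by
          intro h; rw [h] at h1; omega
        have h3 : ¬ i.val = j.val + 1 := by omega
        simp [h1, h2, h3]
      · by_cases h2 : i = j
        · subst h2
          have h3 : ¬ i.val = i.val + 1 := by omega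
          simp [h1, h3]
        · by_cases h3 : i.val = j.val + 1
          · have h1' : ¬ (j.val + 1 + 1 = j.val) := by omega
            simp [h1, h2, h3, h1']
          · simp [h1, h2, h3]
    rw [Finset.sum_congr rfl fun i _ => hsplit i]
    rw [Finset.sum_add_distrib, Finset.sum_add_distrib]
    have S2 : ∑ i : Fin (n-1), (if i = j then f i * d else 0) = f j * d := by
      simp [Finset.sum_ite_eq']
    have S1 : ∑ i : Fin (n-1), (if i.val + 1 = j.val then f i * a else 0) =
        (if 1 ≤ j.val then f ⟨j.val - 1, lt_of_le_of_lt (Nat.sub_le _ _) j.isLt⟩ else 0) * a := by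
      by_cases h1 : 1 ≤ j.val
      · have hc : ∀ i : Fin (n - 1), (i.val + 1 = j.val) ↔
            (i = ⟨j.val - 1, lt_of_le_of_lt (Nat.sub_le _ _) j.isLt⟩) := by
          intro i
          rw [Fin.ext_iff]
          show i.val + 1 = j.val ↔ i.val = j.val - 1
          omega
        rw [Finset.sum_congr rfl fun i _ => if_congr (hc i) rfl rfl]
        rw [Finset.sum_ite_eq' Finset.univ _ (fun i => f i * a)]
        simp [h1]
      · have hz : ∀ i : Fin (n - 1), ¬ (i.val + 1 = j.val) := by
          intro i; omega
        simp [hz, h1]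
    have S3 : ∑ i : Fin (n-1), (if i.val = j.val + 1 then f i * b else 0) =
        (if h : j.val + 1 < n - 1 then f ⟨j.val + 1, h⟩ else 0) * b := by
      by_cases h1 : j.val + 1 < n - 1
      · have hc : ∀ i : Fin (n - 1), (i.val = j.val + 1) ↔ (i = ⟨j.val + 1, h1⟩) := by
          intro i
          rw [Fin.ext_iff]
        rw [Finset.sum_congr rfl fun i _ => if_congr (hc i) rfl rfl]
        rw [Finset.sum_ite_eq' Finset.univ _ (fun i => f i * b)]
        simp [h1]
      · have hz : ∀ i : Fin (n - 1), ¬ (i.val = j.val + 1) := by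
          intro i; have := i.isLt; omega
        simp [hz, h1]
    rw [S1, S2, S3]
  -- v is in the left kernel
  have hvker : Matrix.vecMul v M = 0 := by
    funext j
    rw [hcol v j]
    have hjlt := j.isLt
    simp only [Pi.zero_apply]
    by_cases h1 : 1 ≤ j.val
    · by_cases h2 : j.val + 1 < n - 1
      · rw [dif_pos h2, if_pos h1]
        rw [hvg, hvg, hvg]
        simp only
        have e1 : n - 1 - (j.val - 1) = (n - 2 - j.val) + 2 := by omega
        have e2 : n - 1 - j.val = (n - 2 - j.val) + 1 := by omega
        have e3 : n - 1 - (j.val + 1) = n - 2 - j.val := by omega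
        rw [e1, e2, e3]
        exact key (n - 2 - j.val)
      · -- last column : j.val = n - 2
        rw [dif_neg h2, if_pos h1]
        rw [hvg, hvg]
        simp only
        have hj : j.val = n - 2 := by omega
        have e1 : n - 1 - (j.val - 1) = 2 := by omega
        have e2 : n - 1 - j.val = 1 := by omega
        rw [e1, e2]
        have := key 0
        rw [hg0] at this
        rw [zero_mul]
        linear_combination this
    · -- first column : j.val = 0
      have hj : j.val = 0 := by omega
      have h2 : j.val + 1 < n - 1 := by omega
      rw [dif_pos h2, if_neg h1]
      rw [hvg, hvg]
      simp only
      have e2 : n - 1 - j.val = (n - 2) + 1 := by omega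
      have e3 : n - 1 - (j.val + 1) = n - 2 := by omega
      rw [e2, e3]
      have := key (n - 2)
      rw [show n - 2 + 2 = n by omega, hgn] at this
      rw [zero_mul]
      linear_combination this
  have hn1pos : 0 < n - 1 := by omega
  have hv0ne : v ⟨0, hn1pos⟩ ≠ 0 := by
    rw [hvg]
    simp only [Nat.sub_zero]
    rw [hg]
    simp only
    apply div_ne_zero _ hωm1
    apply mul_ne_zero
    · exact pow_ne_zero _ (by norm_num)
    · rw [← hbdef]; exact hb
  have hvne : v ≠ 0 := by
    intro h
    exact hv0ne (by rw [h]; rfl)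
  -- uniqueness: left-kernel vector vanishing at 0 is zero
  have huniq : ∀ w : Fin (n - 1) → ℂ, Matrix.vecMul w M = 0 → w ⟨0, hn1pos⟩ = 0 → w = 0 := by
    intro w hw hw0
    have hall : ∀ k : ℕ, ∀ hk : k < n - 1, w ⟨k, hk⟩ = 0 := by
      intro k
      induction k using Nat.strong_induction_on with
      | _ k ih =>
        intro hk
        match k, hk with
        | 0, hk => exact hw0
        | (k+1), hk =>
          have hkn : k < n - 1 := by omega
          have hc := hcol w ⟨k, hkn⟩
          rw [hw] at hc
          simp only [Pi.zero_apply] at hc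
          have hbterm : (if h : k + 1 < n - 1 then w ⟨k + 1, h⟩ else 0) = w ⟨k+1, hk⟩ := by
            rw [dif_pos hk]
          rw [hbterm] at hc
          have hwk : w ⟨k, hkn⟩ = 0 := ih k (by omega) hkn
          have haterm : (if 1 ≤ k then w ⟨k - 1, lt_of_le_of_lt (Nat.sub_le _ _) (Fin.isLt ⟨k, hkn⟩)⟩ else 0) = 0 := by
            by_cases h1 : 1 ≤ k
            · rw [if_pos h1]
              exact ih (k-1) (by omega) _
            · rw [if_neg h1]
          rw [haterm, hwk] at hc
          simp only [zero_mul, zero_add] at hc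
          rcases mul_eq_zero.mp hc.symm with h | h
          · exact h
          · exact absurd h hb
    funext i
    have := hall i.val i.isLt
    simpa using this
  -- kernel characterization
  have hker : ∀ w : Fin (n - 1) → ℂ, Matrix.vecMul w M = 0 ↔ ∃ c : ℂ, w = c • v := by
    intro w
    constructor
    · intro hw
      refine ⟨w ⟨0, hn1pos⟩ / v ⟨0, hn1pos⟩, ?_⟩
      set c := w ⟨0, hn1pos⟩ / v ⟨0, hn1pos⟩ with hc
      have hsub : Matrix.vecMul (w - c • v) M = 0 := by
        rw [Matrix.sub_vecMul, Matrix.smul_vecMul, hw, hvker, smul_zero, sub_zero]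
      have h0 : (w - c • v) ⟨0, hn1pos⟩ = 0 := by
        simp only [Pi.sub_apply, Pi.smul_apply, smul_eq_mul, hc]
        field_simp
        ring
      have := huniq _ hsub h0
      have h := sub_eq_zero.mp this
      exact h
    · rintro ⟨c, rfl⟩
      rw [Matrix.smul_vecMul, hvker, smul_zero]
  refine ⟨?_, hker⟩
  -- rank computation
  have hrankT : M.transpose.rank = n - 2 := by
    have hkerT : LinearMap.ker (Matrix.mulVecLin M.transpose) = Submodule.span ℂ {v} := by
      ext w
      rw [LinearMap.mem_ker, Matrix.mulVecLin_apply, Matrix.mulVec_transpose]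
      rw [hker w]
      constructor
      · rintro ⟨c, rfl⟩
        exact Submodule.smul_mem _ c (Submodule.mem_span_singleton_self v)
      · intro h
        rcases Submodule.mem_span_singleton.mp h with ⟨c, hc⟩
        exact ⟨c, hc.symm⟩
    have hfr := LinearMap.finrank_range_add_finrank_ker (Matrix.mulVecLin M.transpose)
    rw [hkerT, finrank_span_singleton hvne] at hfr
    have hdim : Module.finrank ℂ (Fin (n-1) → ℂ) = n - 1 := by
      simp
    rw [hdim] at hfr
    rw [Matrix.rank]
    omega
  rw [← Matrix.rank_transpose]
  exact hrankT
end

section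
/- Let s₁, …, s_n ∈ ℂ* and let 1 ≤ a < n. Define the (n-1)×(n-1) matrix μ acting on basis vectors α_{i,i+1} (i = 1, …, n-1) by: μ(α_{i,i+1}) = (s₁⋯s_a)·α_{i,i+1} for 1 ≤ i ≤ a-1; μ(α_{i,i+1}) = (s_{a+1}⋯s_n)·α_{i,i+1} for a+1 ≤ i ≤ n-1; and μ(α_{a,a+1}) = α_{a,a+1} + Σ_{k=1}^{a-1}(1 − s₁⋯s_k)·α_{k,k+1} + Σ_{k=a+2}^{n} s_{a+1}⋯s_{k-1}(1 − s_k⋯s_n)·α_{k-1,k}. Then the characteristic polynomial of μ is (λ − 1)·(λ − s₁⋯s_a)^{a-1}·(λ − s_{a+1}⋯s_n)^{n-a-1}. Moreover, if s₁⋯s_a ≠ 1 and s_{a+1}⋯s_n ≠ 1, then μ is diagonalizable. -/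
open Polynomial

lemma det_single_col {m : ℕ} {R : Type*} [CommRing R]
    (A : Matrix (Fin m) (Fin m) R) (j0 : Fin m)
    (h : ∀ i j, i ≠ j → j ≠ j0 → A i j = 0) :
    A.det = ∏ i, A i i := by
  rw [Matrix.det_apply]
  rw [Finset.sum_eq_single (1 : Equiv.Perm (Fin m))]
  · simp
  · intro σ _ hσ
    have hex : ∃ j, j ≠ j0 ∧ σ j ≠ j := by
      by_contra hc
      push_neg at hc
      apply hσ
      have hj0 : σ j0 = j0 := by
        by_contra h2
        exact h2 (σ.injective (hc (σ j0) h2))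
      ext j
      by_cases hj : j = j0
      · simp [hj, hj0]
      · simp [hc j hj]
    obtain ⟨j, hj, hσj⟩ := hex
    have hz : ∏ i, A (σ i) i = 0 :=
      Finset.prod_eq_zero (Finset.mem_univ j) (h _ _ hσj hj)
    rw [hz, smul_zero]
  · simp

theorem stmt_14 (n a : ℕ) (ha : 1 ≤ a) (han : a < n)
    (s : ℕ → ℂ) (hs : ∀ i, 1 ≤ i → i ≤ n → s i ≠ 0)
    (M : Matrix (Fin (n - 1)) (Fin (n - 1)) ℂ)
    (hM : ∀ i j : Fin (n - 1),
      M i j =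
        if j.val + 1 ≠ a then
          (if i = j then
            (if j.val + 1 < a then ∏ k ∈ Finset.Icc 1 a, s k
             else ∏ k ∈ Finset.Icc (a + 1) n, s k)
           else 0)
        else
          (if i = j then 1
           else if i.val + 1 < a then 1 - ∏ k ∈ Finset.Icc 1 (i.val + 1), s k
           else if a < i.val + 1 then
             (∏ k ∈ Finset.Icc (a + 1) (i.val + 1), s k) *
               (1 - ∏ k ∈ Finset.Icc (i.val + 2) n, s k)
           else 0)) :
    M.charpoly =
      (X - C 1) * (X - C (∏ k ∈ Finset.Icc 1 a, s k)) ^ (a - 1) *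
        (X - C (∏ k ∈ Finset.Icc (a + 1) n, s k)) ^ (n - a - 1) ∧
    ((∏ k ∈ Finset.Icc 1 a, s k) ≠ 1 → (∏ k ∈ Finset.Icc (a + 1) n, s k) ≠ 1 →
      ∃ (P D : Matrix (Fin (n - 1)) (Fin (n - 1)) ℂ),
        IsUnit P.det ∧ D.IsDiag ∧ M = P * D * P⁻¹) := by
  set P1 := ∏ k ∈ Finset.Icc 1 a, s k with hP1
  set P2 := ∏ k ∈ Finset.Icc (a + 1) n, s k with hP2
  have hj0lt : a - 1 < n - 1 := by omega
  set j0 : Fin (n - 1) := ⟨a - 1, hj0lt⟩ with hj0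
  have hj0iff : ∀ j : Fin (n - 1), j = j0 ↔ j.val + 1 = a := by
    intro j
    constructor
    · rintro rfl; simp [hj0]; omega
    · intro h; apply Fin.ext; simp [hj0]; omega
  -- off-diagonal entries vanish except in column j0
  have col0 : ∀ i j : Fin (n - 1), i ≠ j → j ≠ j0 → M i j = 0 := by
    intro i j hij hj
    have : j.val + 1 ≠ a := fun h => hj ((hj0iff j).mpr h)
    rw [hM i j, if_pos this, if_neg hij]
  -- diagonal entries
  have diag : ∀ i : Fin (n - 1),
      M i i = if i = j0 then 1 else if i.val + 1 < a then P1 else P2 := by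
    intro i
    by_cases h : i = j0
    · have : ¬(i.val + 1 ≠ a) := by simp [(hj0iff i).mp h]
      rw [hM i i, if_neg this, if_pos rfl, if_pos h]
    · have hne : i.val + 1 ≠ a := fun hh => h ((hj0iff i).mpr hh)
      rw [hM i i, if_pos hne, if_pos rfl, if_neg h]
  constructor
  · -- characteristic polynomial
    have hcp : M.charpoly = ∏ i, (X - C (M i i)) := by
      rw [Matrix.charpoly]
      rw [det_single_col (Matrix.charmatrix M) j0]
      · apply Finset.prod_congr rfl
        intro i _
        rw [Matrix.charmatrix_apply_eq]
      · intro i j hij hj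
        rw [Matrix.charmatrix_apply_ne _ _ _ hij, col0 i j hij hj, map_zero, neg_zero]
    rw [hcp]
    set f : ℕ → ℂ[X] := fun k =>
      if k = a - 1 then X - C 1 else if k + 1 < a then X - C P1 else X - C P2 with hf
    have h1 : ∏ i : Fin (n - 1), (X - C (M i i)) = ∏ k ∈ Finset.range (n - 1), f k := by
      rw [← Fin.prod_univ_eq_prod_range f (n - 1)]
      apply Finset.prod_congr rfl
      intro i _
      rw [diag i, hf]
      by_cases h : i = j0
      · have : i.val = a - 1 := by rw [h]
        simp [h, this, hj0]
      · have hva : i.val ≠ a - 1 := fun hh => h (Fin.ext (by simp [hj0, hh]))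
        rw [if_neg h]
        simp only [if_neg hva]
        split_ifs <;> rfl
    rw [h1]
    have hsplit : ∏ k ∈ Finset.range (n - 1), f k =
        (∏ k ∈ Finset.range (a - 1), f k) * ∏ k ∈ Finset.Ico (a - 1) (n - 1), f k :=
      (Finset.prod_range_mul_prod_Ico f (by omega)).symm
    have hbot : ∏ k ∈ Finset.Ico (a - 1) (n - 1), f k =
        f (a - 1) * ∏ k ∈ Finset.Ico (a - 1 + 1) (n - 1), f k :=
      Finset.prod_eq_prod_Ico_succ_bot hj0lt f
    have hlow : ∏ k ∈ Finset.range (a - 1), f k = (X - C P1) ^ (a - 1) := by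
      rw [Finset.prod_congr rfl (fun k hk => ?_), Finset.prod_const, Finset.card_range]
      have hk' := Finset.mem_range.mp hk
      show f k = X - C P1
      rw [hf]
      simp only
      rw [if_neg (by omega), if_pos (by omega)]
    have hhigh : ∏ k ∈ Finset.Ico (a - 1 + 1) (n - 1), f k = (X - C P2) ^ (n - a - 1) := by
      rw [Finset.prod_congr rfl (fun k hk => ?_), Finset.prod_const, Nat.card_Ico]
      · congr 1; omega
      · have hk' := Finset.mem_Ico.mp hk
        show f k = X - C P2
        rw [hf]
        simp only
        rw [if_neg (by omega), if_neg (by omega)]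
    have hmid : f (a - 1) = X - C 1 := by rw [hf]; simp
    rw [hsplit, hbot, hlow, hhigh, hmid]
    ring
  · -- diagonalizability
    intro hP1ne hP2ne
    set d : Fin (n - 1) → ℂ := fun i => M i i with hd
    have hd1 : ∀ i : Fin (n - 1), i ≠ j0 → d i ≠ 1 := by
      intro i hi
      rw [hd]
      simp only
      rw [diag i, if_neg hi]
      by_cases h : i.val + 1 < a
      · rw [if_pos h]; exact hP1ne
      · rw [if_neg h]; exact hP2ne
    have hdj0 : d j0 = 1 := by rw [hd]; simp only; rw [diag j0, if_pos rfl]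
    set v : Fin (n - 1) → ℂ := fun i => if i = j0 then 0 else M i j0 with hv
    set c : Fin (n - 1) → ℂ := fun i => v i / (1 - d i) with hc
    have hcj0 : c j0 = 0 := by rw [hc]; simp [hv]
    set Cm : Matrix (Fin (n - 1)) (Fin (n - 1)) ℂ :=
      Matrix.of (fun i j => if j = j0 then c i else 0) with hCm
    set E : Matrix (Fin (n - 1)) (Fin (n - 1)) ℂ :=
      Matrix.of (fun i j => if j = j0 then v i else 0) with hE
    set P := (1 : Matrix (Fin (n - 1)) (Fin (n - 1)) ℂ) + Cm with hP
    set D := Matrix.diagonal d with hD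
    have hdetP : P.det = 1 := by
      rw [det_single_col P j0]
      · apply Finset.prod_eq_one
        intro i _
        rw [hP]
        simp only [Matrix.add_apply, Matrix.one_apply_eq, hCm, Matrix.of_apply]
        by_cases h : i = j0
        · rw [if_pos h, h, hcj0, add_zero]
        · rw [if_neg h, add_zero]
      · intro i j hij hj
        rw [hP]
        simp [Matrix.one_apply_ne hij, hCm, if_neg hj]
    have hUnit : IsUnit P.det := by rw [hdetP]; exact isUnit_one
    have hME : M = D + E := by
      ext i j
      rw [hD, hE]
      simp only [Matrix.add_apply, Matrix.diagonal_apply, Matrix.of_apply]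
      by_cases hij : i = j
      · subst hij
        rw [if_pos rfl]
        by_cases h : i = j0
        · rw [if_pos h, hv]
          simp only [if_pos h, add_zero]; rfl
        · rw [if_neg h, add_zero]
      · rw [if_neg (fun h => hij h)]
        by_cases hj : j = j0
        · subst hj
          rw [if_pos rfl, hv]
          simp only [if_neg hij, zero_add]
        · rw [if_neg hj, col0 i j hij hj, add_zero]
    have hECm : E * Cm = 0 := by
      ext i j
      rw [hE, hCm]
      simp only [Matrix.mul_apply, Matrix.of_apply, Matrix.zero_apply, ite_mul, zero_mul]
      rw [Finset.sum_ite_eq' Finset.univ j0 (fun k => v i * if j = j0 then c k else 0)]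
      simp [hcj0]
    have hkey : D * Cm + E = Cm * D := by
      ext i j
      rw [hD]
      simp only [Matrix.add_apply, Matrix.diagonal_mul, Matrix.mul_diagonal, hCm, hE,
        Matrix.of_apply]
      by_cases hj : j = j0
      · subst hj
        simp only [if_pos rfl]
        rw [hdj0, mul_one]
        by_cases h : i = j0
        · rw [h, hcj0, hv]; simp
        · rw [hc]
          simp only
          have hne : (1 : ℂ) - d i ≠ 0 := sub_ne_zero.mpr (fun hh => hd1 i h hh.symm)
          simp only [↓reduceIte]
          field_simp
          ring
      · simp only [if_neg hj, mul_zero, add_zero, zero_mul]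
    have hMP : M * P = P * D := by
      rw [hME, hP]
      rw [add_mul, mul_add, mul_add, mul_one, mul_one, hECm, add_zero, add_mul, one_mul]
      rw [add_assoc, hkey]
    refine ⟨P, D, hUnit, Matrix.isDiag_diagonal d, ?_⟩
    rw [← hMP, Matrix.mul_nonsing_inv_cancel_right _ _ hUnit]
end
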